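/- Let φ : X → [0,∞] and let P ⊆ X. Write f = φ · 1_P and g = φ · 1_{X∖P} (so φ = f ⊔ g, the pointwise max). Let R be the reduced operator (inf of majorants in a set W closed under addition), and suppose R f = f. Suppose moreover that R g is real-valued where needed, define f₀ := (f − R g)⁺ on {R g < ∞} and 0 elsewhere, and assume R f₀ = f₀. Then R φ = f ⊔ R g, i.e., the reduction of φ equals the pointwise maximum of f and the reduction of g. -/
import Mathlib


open ENNReal

/-- Key computation in Proposition 2.1: with `f = φ·1_P`, `g = φ·1_{X∖P}`,
if `R f = f` and `R f₀ = f₀` (where `f₀ = 1_{{R g < ∞}}·(f − R g)⁺`), then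
`R φ = f ⊔ R g`. -/
theorem stmt_4 {X : Type*} (W : Set (X → ℝ≥0∞))
    (hW : ∀ u ∈ W, ∀ v ∈ W, u + v ∈ W)
    (R : (X → ℝ≥0∞) → X → ℝ≥0∞)
    (hR : ∀ φ x, R φ x = ⨅ (u ∈ W) (_ : φ ≤ u), u x)
    (φ : X → ℝ≥0∞) (P : Set X) (f g f₀ : X → ℝ≥0∞)
    (hf : f = P.indicator φ) (hg : g = Pᶜ.indicator φ)
    (hf₀ : f₀ = fun x => if R g x < ⊤ then f x - R g x else 0)
    (hRf : R f = f) (hRf₀ : R f₀ = f₀) :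
    R φ = fun x => max (f x) (R g x) := by
  -- basic facts
  have hmono : ∀ a b : X → ℝ≥0∞, a ≤ b → ∀ x, R a x ≤ R b x := by
    intro a b hab x
    rw [hR, hR]
    refine le_iInf fun u => le_iInf fun hu => le_iInf fun hbu => ?_
    exact iInf_le_of_le u (iInf_le_of_le hu (iInf_le _ (hab.trans hbu)))
  have hRle : ∀ (h : X → ℝ≥0∞), ∀ v ∈ W, h ≤ v → ∀ y, R h y ≤ v y := by
    intro h v hv hhv y
    rw [hR]
    exact iInf_le_of_le v (iInf_le_of_le hv (iInf_le _ hhv))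
  have hfphi : f ≤ φ := by
    rw [hf]; exact Set.indicator_le_self _ _
  have hgφ : g ≤ φ := by
    rw [hg]; exact Set.indicator_le_self _ _
  -- key upper bound: φ ≤ u + v whenever u majorizes f₀ and v majorizes g
  have hkey : ∀ u ∈ W, f₀ ≤ u → ∀ v ∈ W, g ≤ v → φ ≤ u + v := by
    intro u hu hfu v hv hgv y
    by_cases hyP : y ∈ P
    · have hfy : f y = φ y := by rw [hf, Set.indicator_of_mem hyP]
      have hRgv : R g y ≤ v y := hRle g v hv hgv y
      by_cases hfin : R g y < ⊤
      · have hf₀y : f₀ y = f y - R g y := by rw [hf₀]; simp [hfin]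
        have : φ y ≤ f₀ y + R g y := by
          rw [hf₀y, ← hfy]
          rcases le_total (R g y) (f y) with h | h
          · rw [tsub_add_cancel_of_le h]
          · rw [tsub_eq_zero_of_le h, zero_add]; exact h
        exact this.trans (add_le_add (hfu y) hRgv)
      · have : v y = ⊤ := top_unique ((not_lt.mp hfin).trans hRgv)
        simp [Pi.add_apply, this]
    · have : g y = φ y := by rw [hg, Set.indicator_of_mem (Set.mem_compl hyP)]
      calc φ y = g y := this.symm
        _ ≤ v y := hgv y
        _ ≤ u y + v y := le_add_self
  funext x
  apply le_antisymm
  · -- R φ x ≤ f₀ x + R g x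
    have hsum : R φ x ≤ f₀ x + R g x := by
      conv_rhs => rw [← hRf₀]
      rw [hR φ, hR f₀, hR g]
      simp only [ENNReal.iInf_add, ENNReal.add_iInf]
      refine le_iInf fun v => le_iInf fun hv => le_iInf fun hgv =>
        le_iInf fun u => le_iInf fun hu => le_iInf fun hfu => ?_
      exact iInf_le_of_le (u + v) (iInf_le_of_le (hW u hu v hv)
        (iInf_le _ (hkey u hu hfu v hv hgv)))
    refine hsum.trans ?_
    by_cases hfin : R g x < ⊤
    · have hf₀x : f₀ x = f x - R g x := by rw [hf₀]; simp [hfin]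
      rw [hf₀x]
      rcases le_total (R g x) (f x) with h | h
      · rw [tsub_add_cancel_of_le h]; exact le_max_left _ _
      · rw [tsub_eq_zero_of_le h, zero_add]; exact le_max_right _ _
    · have : R g x = ⊤ := not_lt.mp hfin |> top_unique
      simp [this]
  · refine max_le ?_ ?_
    · rw [← hRf]; exact hmono f φ hfphi x
    · exact hmono g φ hgφ x
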